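/- Counterexample to exact stochastic invariants: There exists a countable Markov chain with absorbing terminal state ⊥ and an initial state σ such that ℙ_σ(the run visits ⊥) = 1/2, yet there is no set Ψ of states satisfying both (a) ℙ_σ(some state of the run lies outside Ψ) ≤ 1/2 and (b) ℙ_σ(the run visits ⊥ or some state of the run lies outside Ψ) = 1. -/

import Mathlib

open scoped ENNReal Classical

/-- Probability that a countable Markov chain with transition function `P`, currently at
state `s`, visits the set `T` within the next `k` steps. -/
noncomputable def mcHitProbWithin {S : Type} (P : S → PMF S) (T : Set S) : ℕ → S → ℝ≥0∞
  | 0, s => if s ∈ T then 1 else 0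
  | k + 1, s => if s ∈ T then 1 else ∑' s', P s s' * mcHitProbWithin P T k s'

/-- Probability that the Markov chain started at `σ` ever visits the set `T`. -/
noncomputable def mcHitProb {S : Type} (P : S → PMF S) (σ : S) (T : Set S) : ℝ≥0∞ :=
  ⨆ k, mcHitProbWithin P T k σ


/-! Let a run start at `0` and, from state `n`, either move on to `n + 1` or be killed, in such a
way that it survives `n` steps with probability `p n = 1/2 + 2^-(n+1)`. It then terminates with
probability `1 - inf p = 1/2`, yet every non-terminal state is visited with probability `> 1/2`.
So a set `Ψ` satisfying (a) must contain every non-terminal state; but then (b) asks that the run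
terminate almost surely. -/

theorem mcHitProbWithin_of_mem {S : Type} (P : S → PMF S) {T : Set S} {s : S} (hs : s ∈ T)
    (k : ℕ) : mcHitProbWithin P T k s = 1 := by
  cases k <;> simp [mcHitProbWithin, hs]

theorem mcHitProbWithin_succ_of_notMem {S : Type} (P : S → PMF S) {T : Set S} {s : S}
    (hs : s ∉ T) (k : ℕ) :
    mcHitProbWithin P T (k + 1) s = ∑' s', P s s' * mcHitProbWithin P T k s' := by
  simp [mcHitProbWithin, hs]

section KilledChain

variable {p : ℕ → ℝ≥0∞} (hp : Antitone p)

theorem Antitone.apply_succ_div_le_one (hp : Antitone p) (n : ℕ) : p (n + 1) / p n ≤ 1 :=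
  ENNReal.div_le_of_le_mul (by simpa using hp n.le_succ)

/-- From `n` the chain moves to `n + 1` with probability `p (n + 1) / p n` and is killed (moves
to `none`) otherwise, so that started at `0` it survives its first `n` steps with probability
`p n / p 0`. -/
noncomputable def killedChain (hp : Antitone p) : Option ℕ → PMF (Option ℕ)
  | none => PMF.pure none
  | some n => PMF.ofFinset
      (fun s => if s = none then 1 - p (n + 1) / p n else if s = some (n + 1) then p (n + 1) / p n
        else 0)
      {none, some (n + 1)}
      (by simp [tsub_add_cancel_of_le (hp.apply_succ_div_le_one n)])
      (fun s hs => by simp_all)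

theorem tsum_killedChain_mul (n : ℕ) (g : Option ℕ → ℝ≥0∞) :
    ∑' s, killedChain hp (some n) s * g s =
      (1 - p (n + 1) / p n) * g none + p (n + 1) / p n * g (some (n + 1)) := by
  rw [tsum_eq_sum (s := {none, some (n + 1)}) fun s hs => by simp_all [killedChain]]
  simp [killedChain]

variable (hp0 : ∀ n, p n ≠ 0) (hp_top : ∀ n, p n ≠ ⊤)

include hp0 hp_top in
theorem mul_tsum_killedChain_mul (n : ℕ) (g : Option ℕ → ℝ≥0∞) :
    p n * ∑' s, killedChain hp (some n) s * g s =
      (p n - p (n + 1)) * g none + p (n + 1) * g (some (n + 1)) := by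
  have hcancel : p n * (p (n + 1) / p n) = p (n + 1) := ENNReal.mul_div_cancel (hp0 n) (hp_top n)
  rw [tsum_killedChain_mul, mul_add, ← mul_assoc, ← mul_assoc, hcancel,
    ENNReal.mul_sub fun _ _ => hp_top n, mul_one, hcancel]

include hp0 hp_top in
theorem mul_mcHitProbWithin_killedChain_none_add (k n : ℕ) :
    p n * mcHitProbWithin (killedChain hp) {none} k (some n) + p (n + k) = p n := by
  induction k generalizing n with
  | zero => simp [mcHitProbWithin]
  | succ k ih =>
    rw [mcHitProbWithin_succ_of_notMem _ (by simp), mul_tsum_killedChain_mul hp hp0 hp_top,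
      mcHitProbWithin_of_mem _ (Set.mem_singleton none), mul_one, add_assoc,
      add_comm k 1, ← add_assoc n 1 k, ih,
      tsub_add_cancel_of_le (hp n.le_succ)]

include hp0 hp_top in
theorem le_mul_mcHitProbWithin_killedChain {T : Set (Option ℕ)} (j m : ℕ)
    (hT : some (m + j) ∈ T) :
    p (m + j) ≤ p m * mcHitProbWithin (killedChain hp) T j (some m) := by
  induction j generalizing m with
  | zero => rw [add_zero] at hT ⊢; rw [mcHitProbWithin_of_mem _ hT, mul_one]
  | succ j ih =>
    by_cases hm : some m ∈ T
    · simpa [mcHitProbWithin_of_mem _ hm] using hp (m.le_add_right (j + 1))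
    · rw [mcHitProbWithin_succ_of_notMem _ hm, mul_tsum_killedChain_mul hp hp0 hp_top]
      calc p (m + (j + 1)) = p (m + 1 + j) := by rw [add_comm j, add_assoc]
        _ ≤ p (m + 1) * mcHitProbWithin (killedChain hp) T j (some (m + 1)) :=
          ih (m + 1) (by rwa [add_assoc, add_comm 1])
        _ ≤ _ := le_add_self

variable (h0 : p 0 = 1)

include hp0 hp_top h0 in
theorem mcHitProb_killedChain_none :
    mcHitProb (killedChain hp) (some 0) {none} = 1 - ⨅ n, p n := by
  rw [mcHitProb, ENNReal.sub_iInf]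
  congr 1 with k
  have hk := mul_mcHitProbWithin_killedChain_none_add hp hp0 hp_top k 0
  rw [h0, one_mul, zero_add] at hk
  exact ENNReal.eq_sub_of_add_eq (hp_top k) hk

include hp0 hp_top h0 in
theorem le_mcHitProb_killedChain {T : Set (Option ℕ)} {n : ℕ} (hn : some n ∈ T) :
    p n ≤ mcHitProb (killedChain hp) (some 0) T := by
  have hreach := le_mul_mcHitProbWithin_killedChain hp hp0 hp_top n 0 (by rwa [zero_add])
  rw [zero_add, h0, one_mul] at hreach
  exact hreach.trans (le_iSup (mcHitProbWithin (killedChain hp) T · (some 0)) n)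

end KilledChain

noncomputable def halfPlusGeom (n : ℕ) : ℝ≥0∞ := 2⁻¹ + 2⁻¹ ^ (n + 1)

theorem halfPlusGeom_antitone : Antitone halfPlusGeom := fun _ _ h =>
  add_le_add_right (pow_le_pow_right_of_le_one' (by norm_num) (by omega)) _

theorem halfPlusGeom_zero : halfPlusGeom 0 = 1 := by
  simp [halfPlusGeom, ENNReal.inv_two_add_inv_two]

theorem halfPlusGeom_ne_zero (n : ℕ) : halfPlusGeom n ≠ 0 := by
  simp [halfPlusGeom]

theorem halfPlusGeom_ne_top (n : ℕ) : halfPlusGeom n ≠ ⊤ := by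
  simp [halfPlusGeom]

theorem inv_two_lt_halfPlusGeom (n : ℕ) : 2⁻¹ < halfPlusGeom n :=
  ENNReal.lt_add_right (by norm_num) (by simp)

theorem iInf_halfPlusGeom : ⨅ n, halfPlusGeom n = 2⁻¹ := by
  refine iInf_eq_of_tendsto halfPlusGeom_antitone ?_
  have hgeom :
      Filter.Tendsto (fun n : ℕ => (2⁻¹ : ℝ≥0∞) ^ (n + 1)) Filter.atTop (nhds 0) :=
    (ENNReal.tendsto_pow_atTop_nhds_zero_of_lt_one (by norm_num)).comp
      (Filter.tendsto_add_atTop_nat 1)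
  simpa [halfPlusGeom] using tendsto_const_nhds.add hgeom

/-- **Counterexample to exact stochastic invariants.** There is a countable Markov chain
with an absorbing terminal state `term` and an initial state `σ` whose termination
probability is exactly `1/2`, yet no set `Ψ` of states satisfies both (a) the probability
that the run ever leaves `Ψ` is at most `1/2`, and (b) the run almost surely either visits
`term` or leaves `Ψ`. -/
theorem no_exact_stochastic_invariant :
    ∃ (S : Type) (_ : Countable S) (P : S → PMF S) (term σ : S),
      P term = PMF.pure term ∧
      mcHitProb P σ {term} = 1 / 2 ∧
      ¬ ∃ Ψ : Set S,
          mcHitProb P σ Ψᶜ ≤ 1 / 2 ∧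
          mcHitProb P σ ({term} ∪ Ψᶜ) = 1 := by
  have hterm : mcHitProb (killedChain halfPlusGeom_antitone) (some 0) {none} = 2⁻¹ := by
    rw [mcHitProb_killedChain_none halfPlusGeom_antitone halfPlusGeom_ne_zero
      halfPlusGeom_ne_top halfPlusGeom_zero, iInf_halfPlusGeom, ENNReal.one_sub_inv_two]
  refine ⟨Option ℕ, inferInstance, killedChain halfPlusGeom_antitone, none, some 0, rfl,
    by rw [hterm, one_div], ?_⟩
  rintro ⟨Ψ, hleave, hstop⟩
  by_cases hΨ : ∃ n, some n ∉ Ψ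
  · obtain ⟨n, hn⟩ := hΨ
    have hreach := le_mcHitProb_killedChain halfPlusGeom_antitone halfPlusGeom_ne_zero
      halfPlusGeom_ne_top halfPlusGeom_zero (T := Ψᶜ) hn
    rw [one_div] at hleave
    exact (inv_two_lt_halfPlusGeom n).not_ge (hreach.trans hleave)
  · have hset : {none} ∪ Ψᶜ = {none} := by
      refine Set.union_eq_self_of_subset_right fun s hs => ?_
      cases s with
      | none => rfl
      | some n => exact absurd ⟨n, hs⟩ hΨ
    rw [hset, hterm] at hstop
    norm_num at hstop
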